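/- arXiv:1903.12200 — 2 statements merged into one kernel-verified Lean document; each statement's English description precedes it below -/
import Mathlib

section
/- Let a be even, b odd, with gcd(a,b) = 1, and define Q(a;b) := 6·(s(a;2b) + s(2a;b) − 2·s(a;b)). If a² ≡ −1 (mod b), then Q(a;b) = 0. -/
open Finset Real

/-- The classical Dedekind sum `s(a;b)` defined by the cotangent sum. -/
noncomputable def dedekindS (a : ℤ) (b : ℕ) : ℝ :=
  (1 / (4 * (b : ℝ))) * ∑ ν ∈ Finset.Ico 1 b,
    Real.cot (Real.pi * a * ν / b) * Real.cot (Real.pi * ν / b)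

/-- The rational part `Q(a;b)` of the elliptic classical Dedekind sum. -/
noncomputable def Qpart (a b : ℕ) : ℝ :=
  6 * (dedekindS a (2 * b) + dedekindS (2 * a) b - 2 * dedekindS a b)

/-!
If `a² ≡ -1 (mod b)`, the substitution `x ↦ a x` on `ℤ/b` sends `a x` to `-x`; since `cot` is odd,
it turns `s(a;b)` into `-s(a;b)`, and `s(2a;b)` into `-(1/4b) ∑ₓ cot(2πx/b) cot(πax/b)`.
For `a` even and `b` odd, split the sum defining `s(a;2b)` by the parity of `ν`: even `ν` give
`s(a;b)/2`, and writing an odd `ν` as `2x - b` turns `cot(πν/2b)` into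
`-tan(πx/b) = 2 cot(2πx/b) - cot(πx/b)`, so that `s(a;2b) = (1/4b) ∑ₓ cot(2πx/b) cot(πax/b)`.
Hence the three terms of `Q(a;b)` cancel.
-/

namespace Real

theorem cot_periodic : Function.Periodic cot π := by
  simpa only [Function.Periodic, cot_eq_cos_div_sin, Pi.div_apply] using
    cos_antiperiodic.div sin_antiperiodic

theorem cot_zero : cot 0 = 0 := by
  rw [cot_eq_cos_div_sin, sin_zero, div_zero]

theorem cot_neg (x : ℝ) : cot (-x) = -cot x := by
  rw [cot_eq_cos_div_sin, cot_eq_cos_div_sin, cos_neg, sin_neg, div_neg]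

theorem cot_sub_pi_div_two (x : ℝ) : cot (x - π / 2) = -tan x := by
  rw [cot_eq_cos_div_sin, tan_eq_sin_div_cos, cos_sub_pi_div_two, sin_sub_pi_div_two, div_neg]

/-- Holds for every `x`: where `sin x` or `cos x` vanishes, all three terms take the junk value `0`. -/
theorem tan_eq_cot_sub_two_mul_cot_two_mul (x : ℝ) : tan x = cot x - 2 * cot (2 * x) := by
  rw [tan_eq_sin_div_cos, cot_eq_cos_div_sin, cot_eq_cos_div_sin, sin_two_mul, cos_two_mul]
  rcases eq_or_ne (sin x) 0 with hs | hs
  · simp [hs]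
  rcases eq_or_ne (cos x) 0 with hc | hc
  · simp [hc]
  field_simp
  linear_combination sin_sq_add_cos_sq x

end Real

theorem Finset.sum_range_two_mul {M : Type*} [AddCommMonoid M] (f : ℕ → M) (n : ℕ) :
    ∑ i ∈ range (2 * n), f i = ∑ i ∈ range n, f (2 * i) + ∑ i ∈ range n, f (2 * i + 1) := by
  induction n with
  | zero => simp
  | succ n ih =>
    rw [Nat.mul_succ, sum_range_succ, sum_range_succ, ih, sum_range_succ, sum_range_succ]
    abel

theorem ZMod.sum_range_natCast {M : Type*} [AddCommMonoid M] {n : ℕ} [NeZero n]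
    (f : ZMod n → M) : ∑ i ∈ range n, f i = ∑ x : ZMod n, f x :=
  sum_nbij' (↑) ZMod.val (fun _ _ ↦ mem_univ _) (fun x _ ↦ mem_range.mpr x.val_lt)
    (fun _ hi ↦ ZMod.val_cast_of_lt (mem_range.mp hi)) (fun x _ ↦ ZMod.natCast_zmod_val x)
    (fun _ _ ↦ rfl)

theorem Function.Periodic.apply_pi_mul_val_intCast_div {f : ℝ → ℝ} (hf : Function.Periodic f π)
    {b : ℕ} [NeZero b] (m : ℤ) : f (π * (m : ZMod b).val / b) = f (π * m / b) := by
  have hb : (b : ℝ) ≠ 0 := Nat.cast_ne_zero.mpr (NeZero.ne b)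
  have hval : ((m : ZMod b).val : ℝ) = m - b * (m / b : ℤ) := by
    have h := Int.emod_add_mul_ediv m b
    rw [← ZMod.val_intCast] at h
    rw [eq_sub_iff_add_eq]
    exact_mod_cast h
  rw [hval, show π * (m - b * (m / b : ℤ)) / b = π * m / b - (m / b : ℤ) * π by field_simp]
  exact hf.sub_int_mul_eq _

noncomputable def cotZMod (b : ℕ) (x : ZMod b) : ℝ := cot (π * x.val / b)

section CotZMod

variable {b : ℕ} [NeZero b]

theorem cotZMod_intCast (m : ℤ) : cotZMod b m = cot (π * m / b) :=
  cot_periodic.apply_pi_mul_val_intCast_div m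

theorem cotZMod_neg (x : ZMod b) : cotZMod b (-x) = -cotZMod b x := by
  obtain ⟨m, rfl⟩ := ZMod.intCast_surjective x
  rw [← Int.cast_neg, cotZMod_intCast, cotZMod_intCast, Int.cast_neg, mul_neg, neg_div, cot_neg]

theorem sum_cotZMod_mul_eq_neg_of_mul_self_eq_neg_one {α : ZMod b} (hα : α * α = -1)
    (β : ZMod b) :
    ∑ x, cotZMod b (β * x) * cotZMod b (α * x) = -∑ x, cotZMod b (β * α * x) * cotZMod b x := by
  have hunit : IsUnit α := .of_mul_eq_one (-α) (by rw [mul_neg, hα, neg_neg])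
  conv_rhs => rw [← Equiv.sum_comp (Units.mulLeft hunit.unit), ← sum_neg_distrib]
  refine sum_congr rfl fun x _ ↦ ?_
  rw [Units.mulLeft_apply, IsUnit.unit_spec, show β * α * (α * x) = -(β * x) by
    linear_combination (β * x) * hα, cotZMod_neg]
  ring

end CotZMod

noncomputable def dedekindTerm (a : ℤ) (n : ℕ) (ν : ℤ) : ℝ :=
  cot (π * a * ν / n) * cot (π * ν / n)

theorem dedekindS_eq_sum_range (a : ℤ) (n : ℕ) :
    dedekindS a n = 1 / (4 * n) * ∑ ν ∈ range n, dedekindTerm a n ν := by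
  rcases n.eq_zero_or_pos with rfl | hn
  · simp [dedekindS]
  rw [dedekindS, sum_range_eq_add_Ico _ hn]
  simp [dedekindTerm, cot_zero]

theorem dedekindTerm_eq_cotZMod (a : ℤ) {b : ℕ} [NeZero b] (ν : ℤ) :
    dedekindTerm a b ν = cotZMod b (a * ν) * cotZMod b ν := by
  rw [← Int.cast_mul, cotZMod_intCast, cotZMod_intCast, dedekindTerm, Int.cast_mul, mul_assoc]

theorem dedekindS_eq_sum_zmod (a : ℤ) (b : ℕ) [NeZero b] :
    dedekindS a b = 1 / (4 * b) * ∑ x : ZMod b, cotZMod b (a * x) * cotZMod b x := by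
  rw [dedekindS_eq_sum_range, ← ZMod.sum_range_natCast]
  simp only [dedekindTerm_eq_cotZMod, Int.cast_natCast]

theorem ZMod.intCast_mul_self_eq_neg_one {a : ℤ} {b : ℕ} (h : (b : ℤ) ∣ a ^ 2 + 1) :
    (a : ZMod b) * a = -1 := by
  have h0 := (ZMod.intCast_zmod_eq_zero_iff_dvd _ _).mpr h
  push_cast at h0
  linear_combination h0

theorem dedekindS_eq_zero_of_dvd_sq_add_one {a : ℤ} {b : ℕ} (h : (b : ℤ) ∣ a ^ 2 + 1) :
    dedekindS a b = 0 := by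
  have : NeZero b := ⟨by
    rintro rfl
    rw [Nat.cast_zero, zero_dvd_iff] at h
    exact absurd h (by positivity)⟩
  have hsum := sum_cotZMod_mul_eq_neg_of_mul_self_eq_neg_one (ZMod.intCast_mul_self_eq_neg_one h) 1
  simp only [one_mul] at hsum
  have hcomm : ∑ x : ZMod b, cotZMod b x * cotZMod b (a * x) =
      ∑ x : ZMod b, cotZMod b (a * x) * cotZMod b x :=
    sum_congr rfl fun _ _ ↦ mul_comm _ _
  rw [dedekindS_eq_sum_zmod]
  linear_combination (1 / (4 * b : ℝ) / 2) * (hsum - hcomm)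

theorem dedekindTerm_two_mul_two_mul (a : ℤ) (b : ℕ) (m : ℤ) :
    dedekindTerm a (2 * b) (2 * m) = dedekindTerm a b m := by
  simp only [dedekindTerm, Nat.cast_mul, Nat.cast_ofNat, Int.cast_mul, Int.cast_ofNat]
  congr 2 <;> ring

theorem dedekindTerm_two_mul_sub_of_even {a : ℤ} (ha : Even a) {b : ℕ} [NeZero b] (m : ℤ) :
    dedekindTerm a (2 * b) (2 * m - b) = -(tan (π * m / b) * cot (π * a * m / b)) := by
  have hb : (b : ℝ) ≠ 0 := Nat.cast_ne_zero.mpr (NeZero.ne b)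
  obtain ⟨k, rfl⟩ := ha
  have h₁ : π * ↑(k + k) * ↑(2 * m - b) / ↑(2 * b) = π * ↑(k + k) * m / b - k * π := by
    push_cast; field_simp; ring
  have h₂ : π * ↑(2 * m - b) / ↑(2 * b) = π * m / b - π / 2 := by
    push_cast; field_simp
  rw [dedekindTerm, h₁, h₂, cot_periodic.sub_int_mul_eq, cot_sub_pi_div_two]
  ring

theorem dedekindS_two_mul_of_even_of_odd {a : ℤ} (ha : Even a) {b : ℕ} [NeZero b] (hb : Odd b) :
    dedekindS a (2 * b) = 1 / (4 * b) * ∑ x : ZMod b, cotZMod b (2 * x) * cotZMod b (a * x) := by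
  obtain ⟨t, ht⟩ := hb
  have h_even : ∑ μ ∈ range b, dedekindTerm a (2 * b) ↑(2 * μ) =
      ∑ x : ZMod b, cotZMod b x * cotZMod b (a * x) := by
    rw [← ZMod.sum_range_natCast]
    refine sum_congr rfl fun μ _ ↦ ?_
    rw [Nat.cast_mul, Nat.cast_ofNat, dedekindTerm_two_mul_two_mul, dedekindTerm_eq_cotZMod,
      Int.cast_natCast, mul_comm]
  -- `2μ + 1 = 2(μ + t + 1) - b`, and `x ↦ x + (t + 1)` permutes `ZMod b`.
  have h_odd : ∑ μ ∈ range b, dedekindTerm a (2 * b) ↑(2 * μ + 1) =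
      -∑ x : ZMod b, (cotZMod b x - 2 * cotZMod b (2 * x)) * cotZMod b (a * x) := by
    rw [← Equiv.sum_comp (Equiv.addRight ((t + 1 : ℕ) : ZMod b)), ← ZMod.sum_range_natCast,
      ← sum_neg_distrib]
    refine sum_congr rfl fun μ _ ↦ ?_
    simp only [Equiv.coe_addRight]
    set n : ℤ := ((μ + (t + 1) : ℕ) : ℤ) with hn
    have hν : ((2 * μ + 1 : ℕ) : ℤ) = 2 * n - b := by omega
    rw [hν, dedekindTerm_two_mul_sub_of_even ha, tan_eq_cot_sub_two_mul_cot_two_mul,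
      show (μ : ZMod b) + ((t + 1 : ℕ) : ZMod b) = n by push_cast [hn]; rfl,
      show (2 : ZMod b) * n = ((2 * n : ℤ) : ZMod b) by push_cast; rfl,
      show (a : ZMod b) * n = ((a * n : ℤ) : ZMod b) by push_cast; rfl,
      cotZMod_intCast, cotZMod_intCast, cotZMod_intCast]
    push_cast
    ring_nf
  rw [dedekindS_eq_sum_range, sum_range_two_mul, h_even, h_odd]
  simp only [sub_mul, sum_sub_distrib, mul_assoc, ← mul_sum]
  push_cast
  ring

theorem Qpart_zero_general (a b : ℕ) (haev : Even a) (hbodd : Odd b)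
    (hsq : (b : ℤ) ∣ (a : ℤ) ^ 2 + 1) :
    Qpart a b = 0 := by
  have : NeZero b := ⟨hbodd.pos.ne'⟩
  have h_two_mul_a : dedekindS (2 * a) b =
      -(1 / (4 * b) * ∑ x : ZMod b, cotZMod b (2 * x) * cotZMod b ((a : ℤ) * x)) := by
    rw [sum_cotZMod_mul_eq_neg_of_mul_self_eq_neg_one (ZMod.intCast_mul_self_eq_neg_one hsq),
      dedekindS_eq_sum_zmod]
    push_cast
    ring
  rw [Qpart, dedekindS_two_mul_of_even_of_odd (by exact_mod_cast haev) hbodd, h_two_mul_a,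
    dedekindS_eq_zero_of_dvd_sq_add_one hsq]
  ring

theorem Qpart_zero (a b : ℕ) (ha : 0 < a) (hb : 0 < b) (haev : Even a) (hbodd : Odd b)
    (hcop : Nat.gcd a b = 1) (hsq : (b : ℤ) ∣ (a : ℤ) ^ 2 + 1) :
    Qpart a b = 0 :=
  Qpart_zero_general a b haev hbodd hsq
end

section
/- Define M(a;b) := a·b² + 3·∑_{ν=1}^{2b−1} ⌊aν/(2b)⌋·(b−ν) + 3·∑_{ν=1}^{b−1} (⌊2aν/b⌋ − 2⌊aν/b⌋)·(b−2ν). Then for coprime positive integers a, b with a+b odd, b·Q(a;b) = a(1−3b)/2 + M(a;b), where Q(a;b) := 6·(s(a;2b) + s(2a;b) − 2·s(a;b)). -/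
open Finset Real

/-- The integral part `M(a;b)`. -/
def Mpart (a b : ℕ) : ℤ :=
  (a : ℤ) * (b : ℤ) ^ 2
    + 3 * ∑ ν ∈ Finset.Ico 1 (2 * b), ((a * ν / (2 * b) : ℕ) : ℤ) * ((b : ℤ) - (ν : ℤ))
    + 3 * ∑ ν ∈ Finset.Ico 1 b,
        (((2 * a * ν / b : ℕ) : ℤ) - 2 * ((a * ν / b : ℕ) : ℤ)) * ((b : ℤ) - 2 * (ν : ℤ))

/-!
On `ZMod N` the sawtooth `((j/N))` has discrete Fourier transform `k ↦ (i/2) cot(πk/N)`: away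
from `k = 0` this is the geometric sum `∑ (k/N - 1/2) wᵏ = 1/(w - 1)` over an `N`-th root of
unity `w ≠ 1`, and at `k = 0` both sides vanish (the sawtooth is odd, and `Real.cot = cos / sin`
is `0` at multiples of `π`). Fourier inversion turns the cotangent sum defining `s(a;N)` into
`4N ∑ ((aj/N))((j/N))`. Replacing `((aj/N))` by `aj/N - ⌊aj/N⌋ - 1/2` changes the summand by an
odd function of `j`, so the sum is unchanged, and the remaining polynomial sums have closed forms.
This expresses `s(a;N)` as `a(N-1)(N-2)/(12N)` plus a floor sum, and the identity for `b Q(a;b)`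
follows by linear algebra.
-/

lemma sub_one_mul_sum_range_mul_pow {R : Type*} [CommRing R] (w : R) (n : ℕ) :
    (w - 1) * ∑ k ∈ range n, (k : R) * w ^ k = n * w ^ n - w * ∑ k ∈ range n, w ^ k := by
  induction n with
  | zero => simp
  | succ n ih =>
    rw [sum_range_succ, sum_range_succ, mul_add, ih]
    push_cast
    ring

lemma sum_range_div_sub_half_mul_pow {K : Type*} [Field K] {N : ℕ} (hN : (N : K) ≠ 0) {w : K}
    (hwN : w ^ N = 1) (hw1 : w ≠ 1) :
    ∑ k ∈ range N, ((k : K) / N - 1 / 2) * w ^ k = (w - 1)⁻¹ := by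
  have hgeom : ∑ k ∈ range N, w ^ k = 0 := by rw [geom_sum_eq hw1, hwN, sub_self, zero_div]
  have hid := sub_one_mul_sum_range_mul_pow w N
  rw [hwN, hgeom, mul_zero, sub_zero, mul_one] at hid
  have hw1' : w - 1 ≠ 0 := sub_ne_zero.2 hw1
  simp_rw [sub_mul, sum_sub_distrib, ← mul_sum, hgeom, mul_zero, sub_zero, div_mul_eq_mul_div,
    ← sum_div]
  field_simp
  linear_combination hid

lemma sum_range_affine_mul_affine {K : Type*} [Field K] [CharZero K] (α β γ δ : K) (n : ℕ) :
    ∑ k ∈ range n, (α * k + β) * (γ * k + δ) =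
      α * γ * (n - 1) * n * (2 * n - 1) / 6 + (α * δ + β * γ) * n * (n - 1) / 2 + β * δ * n := by
  induction n with
  | zero => simp
  | succ n ih =>
    rw [sum_range_succ, ih]
    push_cast
    ring

lemma Complex.inv_exp_sub_one_add_half {z : ℂ} (hz : Complex.exp (-(2 * z * Complex.I)) ≠ 1) :
    (Complex.exp (-(2 * z * Complex.I)) - 1)⁻¹ + 1 / 2 = Complex.I / 2 * Complex.cot z := by
  set u := Complex.exp (z * Complex.I)
  have hu : u ≠ 0 := Complex.exp_ne_zero _
  have hw : Complex.exp (-(2 * z * Complex.I)) = (u ^ 2)⁻¹ := by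
    rw [Complex.exp_neg, ← Complex.exp_nat_mul]
    push_cast
    ring_nf
  have hu2 : 1 - u ^ 2 ≠ 0 := fun h => hz (by rw [hw, ← sub_eq_zero.1 h, inv_one])
  have hsin : Complex.sin z = (1 - u ^ 2) / u * Complex.I / 2 := by
    rw [Complex.sin, neg_mul, Complex.exp_neg]
    field_simp
    ring
  have hcos : Complex.cos z = (1 + u ^ 2) / u / 2 := by
    rw [Complex.cos, neg_mul, Complex.exp_neg]
    field_simp
    ring
  rw [hw, Complex.cot_eq_cos_div_sin, hcos, hsin]
  field_simp
  ring

namespace ZMod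

variable {N : ℕ} [NeZero N]

noncomputable def sawtooth (j : ZMod N) : ℝ := if j = 0 then 0 else j.val / N - 1 / 2

lemma sawtooth_eq (j : ZMod N) :
    sawtooth j = j.val / N - 1 / 2 + if j = 0 then 1 / 2 else 0 := by
  by_cases hj : j = 0 <;> simp [sawtooth, hj]

lemma sawtooth_odd : (sawtooth : ZMod N → ℝ).Odd := by
  intro j
  by_cases hj : j = 0
  · simp [sawtooth, hj]
  have : NeZero j := ⟨hj⟩
  have hN : (N : ℝ) ≠ 0 := Nat.cast_ne_zero.2 (NeZero.ne N)
  rw [sawtooth, sawtooth, if_neg (neg_ne_zero.2 hj), if_neg hj, val_neg_of_ne_zero,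
    Nat.cast_sub (val_le j)]
  field_simp
  ring

lemma sum_val_eq_sum_range {M : Type*} [AddCommMonoid M] (f : ℕ → M) :
    ∑ j : ZMod N, f j.val = ∑ n ∈ range N, f n :=
  sum_nbij val (fun j _ => mem_range.2 (val_lt j)) (fun _ _ _ _ h => val_injective N h)
    (fun n hn => ⟨n, mem_univ _, val_cast_of_lt (mem_range.1 hn)⟩) (fun _ _ => rfl)

lemma sum_range_natCast_s14 {M : Type*} [AddCommMonoid M] (f : ZMod N → M) :
    ∑ n ∈ range N, f n = ∑ j, f j := by
  simpa using (sum_val_eq_sum_range (N := N) (fun n => f n)).symm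

lemma sum_dft_mul_dft (Φ : ZMod N → ℂ) (a : ZMod N) :
    ∑ j, 𝓕 Φ (a * j) * 𝓕 Φ j = N * ∑ j, Φ (-(a * j)) * Φ j := by
  have hinner (m : ZMod N) :
      ∑ j, stdAddChar (-(m * (a * j))) • Φ m * 𝓕 Φ j = Φ m * (N * Φ (-(a * m))) := by
    rw [mul_comm a m, ← smul_eq_mul (N : ℂ), ← congrFun (dft_dft Φ) (m * a), dft_apply, mul_sum]
    refine sum_congr rfl fun j _ => ?_
    rw [smul_eq_mul, smul_eq_mul, show j * (m * a) = m * (a * j) by ring]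
    ring
  simp_rw [dft_apply Φ (a * _), sum_mul]
  rw [sum_comm]
  simp_rw [hinner, mul_sum]
  exact sum_congr rfl fun j _ => by ring

lemma dft_sawtooth (n : ℤ) :
    𝓕 (fun j ↦ (sawtooth j : ℂ)) (n : ZMod N) = Complex.I / 2 * Real.cot (π * n / N) := by
  have hN : (N : ℝ) ≠ 0 := Nat.cast_ne_zero.2 (NeZero.ne N)
  by_cases hn : (n : ZMod N) = 0
  · obtain ⟨k, rfl⟩ := (intCast_zmod_eq_zero_iff_dvd n N).1 hn
    have hcot : Real.cot (π * ((N * k : ℤ) : ℝ) / N) = 0 := by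
      rw [Real.cot_eq_cos_div_sin, show π * ((N * k : ℤ) : ℝ) / N = k * π by push_cast; field_simp,
        Real.sin_int_mul_pi, div_zero]
    rw [hn, dft_apply_zero, hcot, Complex.ofReal_zero, mul_zero]
    exact Function.Odd.sum_eq_zero fun j => by simp [sawtooth_odd j]
  set w : ℂ := stdAddChar (-(n : ZMod N)) with hw
  have hw1 : w ≠ 1 := fun h =>
    hn (neg_eq_zero.1 (injective_stdAddChar (h.trans (AddChar.map_zero_eq_one _).symm)))
  have hwN : w ^ N = 1 := by
    rw [← AddChar.map_nsmul_eq_pow, nsmul_eq_mul, natCast_self, zero_mul, AddChar.map_zero_eq_one]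
  have hsum : 𝓕 (fun j ↦ (sawtooth j : ℂ)) (n : ZMod N) =
      ∑ k ∈ range N, (((k : ℂ) / N - 1 / 2) * w ^ k + if k = 0 then 1 / 2 else 0) := by
    rw [dft_apply, ← sum_val_eq_sum_range]
    refine sum_congr rfl fun j _ => ?_
    rw [show -(j * n) = j.val • -(n : ZMod N) by rw [nsmul_eq_mul, natCast_zmod_val]; ring,
      AddChar.map_nsmul_eq_pow, ← hw, smul_eq_mul, sawtooth_eq]
    by_cases hj : j = 0
    · simp [hj]
    · rw [if_neg hj, if_neg (mt (val_eq_zero j).1 hj)]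
      push_cast
      ring
  have hwz : w = Complex.exp (-(2 * ((π * n / N : ℝ) : ℂ) * Complex.I)) := by
    rw [hw, ← Int.cast_neg, stdAddChar_coe]
    push_cast
    ring_nf
  rw [hsum, sum_add_distrib, sum_range_div_sub_half_mul_pow (by exact_mod_cast hN) hwN hw1,
    sum_ite_eq', if_pos (mem_range.2 (Nat.pos_of_neZero N)), Complex.ofReal_cot, hwz]
  exact Complex.inv_exp_sub_one_add_half (hwz ▸ hw1)

lemma cot_eq_dft_sawtooth (n : ℤ) :
    (Real.cot (π * n / N) : ℂ) = -2 * Complex.I * 𝓕 (fun j ↦ (sawtooth j : ℂ)) (n : ZMod N) := by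
  rw [dft_sawtooth, ← mul_assoc]
  field_simp
  simp

lemma sum_Ico_cot_mul_cot (a : ℤ) :
    ∑ ν ∈ Ico 1 N, Real.cot (π * a * ν / N) * Real.cot (π * ν / N) =
      4 * N * ∑ j : ZMod N, sawtooth ((a : ZMod N) * j) * sawtooth j := by
  set Ψ : ZMod N → ℂ := 𝓕 (fun j ↦ (sawtooth j : ℂ))
  have hterm (ν : ℕ) : ((Real.cot (π * a * ν / N) * Real.cot (π * ν / N) : ℝ) : ℂ) =
      -4 * (Ψ ((a : ZMod N) * ν) * Ψ ν) := by
    have h1 := cot_eq_dft_sawtooth (N := N) (a * ν)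
    have h2 := cot_eq_dft_sawtooth (N := N) ν
    simp only [Int.cast_mul, Int.cast_natCast] at h1 h2
    rw [Complex.ofReal_mul, mul_assoc π, h1, h2]
    linear_combination (4 * Ψ (a * ν) * Ψ ν) * Complex.I_mul_I
  have hΨ0 : Ψ 0 = 0 := by
    simpa [Real.cot_eq_cos_div_sin] using dft_sawtooth (N := N) 0
  have hrange : ∑ ν ∈ Ico 1 N, Ψ (a * ν) * Ψ ν = ∑ j, Ψ (a * j) * Ψ j := by
    rw [← sum_range_natCast_s14, sum_range_eq_add_Ico _ (Nat.pos_of_neZero N)]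
    simp [hΨ0]
  apply Complex.ofReal_injective
  rw [Complex.ofReal_sum]
  simp_rw [hterm]
  rw [← mul_sum, hrange, sum_dft_mul_dft]
  simp only [sawtooth_odd _, Complex.ofReal_neg, Complex.ofReal_mul, Complex.ofReal_sum,
    Complex.ofReal_natCast, Complex.ofReal_ofNat, mul_sum]
  exact sum_congr rfl fun j _ => by ring

lemma sum_sawtooth_mul_sawtooth (a : ZMod N) :
    ∑ j, sawtooth (a * j) * sawtooth j = ∑ j, ((a * j).val / N - 1 / 2 : ℝ) * sawtooth j := by
  have hodd : (fun j => if a * j = 0 then sawtooth j / 2 else 0 : ZMod N → ℝ).Odd := by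
    intro j
    simp only [mul_neg, neg_eq_zero, sawtooth_odd j]
    split_ifs <;> ring
  rw [← sub_eq_zero, ← sum_sub_distrib, ← hodd.sum_eq_zero]
  refine sum_congr rfl fun j _ => ?_
  rw [sawtooth_eq (a * j)]
  split_ifs <;> ring

end ZMod

lemma sum_Ico_mod_div_sub_half_mul (a c : ℕ) (hc : 0 < c) :
    ∑ n ∈ Ico 1 c, (((a * n % c : ℕ) : ℝ) / c - 1 / 2) * (n / c - 1 / 2) =
      a * (c - 1) * (c - 2) / (12 * c) +
        1 / (2 * c) * ∑ n ∈ Ico 1 c, ((a * n / c : ℕ) : ℝ) * (c - 2 * n) := by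
  have hc0 : (c : ℝ) ≠ 0 := Nat.cast_ne_zero.2 hc.ne'
  have hsplit (n : ℕ) : (((a * n % c : ℕ) : ℝ) / c - 1 / 2) * (n / c - 1 / 2) =
      (a / c * n + -1 / 2) * (1 / c * n + -1 / 2) +
        1 / (2 * c) * (((a * n / c : ℕ) : ℝ) * (c - 2 * n)) := by
    have hmod : ((a * n % c : ℕ) : ℝ) = a * n - c * ((a * n / c : ℕ) : ℝ) := by
      rw [eq_sub_iff_add_eq]
      exact_mod_cast Nat.mod_add_div (a * n) c
    rw [hmod]
    field_simp
    ring
  rw [sum_congr rfl fun n _ => hsplit n, sum_add_distrib, ← mul_sum, sum_Ico_eq_sub _ hc,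
    sum_range_affine_mul_affine, sum_range_one]
  field_simp
  ring

theorem dedekindS_natCast_eq (a c : ℕ) (hc : 0 < c) :
    dedekindS a c = a * (c - 1) * (c - 2) / (12 * c) +
      1 / (2 * c) * ∑ ν ∈ Ico 1 c, ((a * ν / c : ℕ) : ℝ) * (c - 2 * ν) := by
  have : NeZero c := ⟨hc.ne'⟩
  have hc0 : (c : ℝ) ≠ 0 := Nat.cast_ne_zero.2 hc.ne'
  set g : ℕ → ℝ := fun n =>
    (((a * n % c : ℕ) : ℝ) / c - 1 / 2) * if n = 0 then (0 : ℝ) else (n : ℝ) / c - 1 / 2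
  have hval (j : ZMod c) : (((a : ZMod c) * j).val / c - 1 / 2 : ℝ) * j.sawtooth = g j.val := by
    simp only [g, ZMod.sawtooth, ZMod.val_mul, ZMod.val_natCast, Nat.mod_mul_mod, ZMod.val_eq_zero]
  rw [dedekindS, ZMod.sum_Ico_cot_mul_cot, Int.cast_natCast, ZMod.sum_sawtooth_mul_sawtooth,
    ← sum_Ico_mod_div_sub_half_mul a c hc, sum_congr rfl fun j _ => hval j,
    ZMod.sum_val_eq_sum_range g, sum_range_eq_add_Ico _ hc, ← mul_assoc,
    one_div_mul_cancel (mul_ne_zero four_ne_zero hc0), one_mul]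
  simp only [g, if_true, mul_zero, zero_add]
  refine sum_congr rfl fun n hn => ?_
  rw [if_neg (Nat.one_le_iff_ne_zero.1 (mem_Ico.1 hn).1)]

theorem bQ_eq_M_general (a b : ℕ) (hb : 0 < b) :
    (b : ℝ) * Qpart a b = (a : ℝ) * (1 - 3 * b) / 2 + (Mpart a b : ℝ) := by
  have h2a : (2 * a : ℤ) = ((2 * a : ℕ) : ℤ) := by push_cast; ring
  have hfloor₁ : ∑ ν ∈ Ico 1 (2 * b), ((a * ν / (2 * b) : ℕ) : ℝ) * ((2 * b : ℕ) - 2 * ν) =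
      2 * ∑ ν ∈ Ico 1 (2 * b), ((a * ν / (2 * b) : ℕ) : ℝ) * (b - ν) := by
    rw [mul_sum]
    exact sum_congr rfl fun ν _ => by push_cast; ring
  have hfloor₂ : ∑ ν ∈ Ico 1 b, ((2 * a * ν / b : ℕ) : ℝ) * (b - 2 * ν) -
      2 * ∑ ν ∈ Ico 1 b, ((a * ν / b : ℕ) : ℝ) * (b - 2 * ν) =
      ∑ ν ∈ Ico 1 b, (((2 * a * ν / b : ℕ) : ℝ) - 2 * ((a * ν / b : ℕ) : ℝ)) * (b - 2 * ν) := by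
    rw [mul_sum, ← sum_sub_distrib]
    exact sum_congr rfl fun ν _ => by ring
  rw [Qpart, h2a, dedekindS_natCast_eq a (2 * b) (by omega), dedekindS_natCast_eq (2 * a) b hb,
    dedekindS_natCast_eq a b hb, hfloor₁, Mpart]
  simp only [Int.cast_add, Int.cast_mul, Int.cast_pow, Int.cast_sub, Int.cast_sum,
    Int.cast_natCast, Int.cast_ofNat, ← hfloor₂]
  have hb0 : (b : ℝ) ≠ 0 := Nat.cast_ne_zero.2 hb.ne'
  push_cast
  field_simp
  ring

theorem bQ_eq_M (a b : ℕ) (ha : 0 < a) (hb : 0 < b) (hcop : Nat.gcd a b = 1)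
    (hodd : Odd (a + b)) :
    (b : ℝ) * Qpart a b = (a : ℝ) * (1 - 3 * b) / 2 + (Mpart a b : ℝ) :=
  bQ_eq_M_general a b hb
end
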